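/- arXiv:1608.00019 — 2 statements merged into one kernel-verified Lean document; each statement's English description precedes it below -/
import Mathlib

section
/- Let a : Fin n → ℕ (thick-level widths) and b : Fin (n-1) → ℕ (thin-level widths) be such that b_j < a_j and b_j < a_{j+1} for all j (thin levels are strictly smaller than adjacent thick levels) and all values are even. Then the width W = (1/2)(Σ a_i² − Σ b_j²) satisfies W ≥ (max a_i)²/2, i.e., 2W ≥ (trunk)². -/
/-!
Let `m` be a thickest level. Every thin level `j` sits between the thick levels `j` and `j + 1`,
at least one of which is not `m`; sending `j` to that one (`m.succAbove j`) injects the thin levels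
into the thick levels other than `m`, each thin level being narrower than its image. Hence
`∑ aᵢ² - ∑ bⱼ² ≥ aₘ²`, and as `aₘ²` is even, halving and doubling loses nothing.
-/

theorem Fin.succAbove_of_castSucc_of_succ {k : ℕ} {P : Fin (k + 1) → Prop} (m : Fin (k + 1))
    (j : Fin k) (h_castSucc : P j.castSucc) (h_succ : P j.succ) : P (m.succAbove j) := by
  rcases lt_or_ge j.castSucc m with h | h
  · rwa [m.succAbove_of_castSucc_lt j h]
  · rwa [m.succAbove_of_le_castSucc j h]

theorem Fin.add_sum_le_sum_of_le_succAbove {M : Type*} [AddCommMonoid M] [PartialOrder M]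
    [IsOrderedAddMonoid M] {k : ℕ} (f : Fin (k + 1) → M) (g : Fin k → M) (m : Fin (k + 1))
    (h : ∀ j, g j ≤ f (m.succAbove j)) : f m + ∑ j, g j ≤ ∑ i, f i := by
  rw [Fin.sum_univ_succAbove f m]
  gcongr with j
  exact h j

theorem Nat.le_two_mul_div_two_of_even {x y : ℕ} (hy : Even y) (hxy : y ≤ x) :
    y ≤ 2 * (x / 2) :=
  calc y = 2 * (y / 2) := (Nat.two_mul_div_two_of_even hy).symm
    _ ≤ 2 * (x / 2) := by gcongr

theorem stmt_7 (n : ℕ) (a : Fin n → ℕ) (b : Fin (n - 1) → ℕ)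
    (hadj : ∀ j : Fin (n - 1), b j < a ⟨j.1, by omega⟩ ∧ b j < a ⟨j.1 + 1, by omega⟩)
    (haeven : ∀ i, Even (a i)) :
    2 * ((∑ i, (a i) ^ 2 - ∑ j, (b j) ^ 2) / 2) ≥ (Finset.univ.sup a) ^ 2 := by
  rcases n with _ | k
  · simp
  obtain ⟨m, -, hm⟩ := Finset.univ.exists_mem_eq_sup Finset.univ_nonempty a
  have hthin : ∀ j : Fin k, b j ^ 2 ≤ a (m.succAbove j) ^ 2 := fun j =>
    Nat.pow_le_pow_left (m.succAbove_of_castSucc_of_succ (P := fun i => b j < a i) j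
      (hadj j).1 (hadj j).2).le 2
  have hsum : a m ^ 2 + ∑ j, b j ^ 2 ≤ ∑ i, a i ^ 2 :=
    Fin.add_sum_le_sum_of_le_succAbove (fun i => a i ^ 2) (fun j => b j ^ 2) m hthin
  rw [hm]
  exact Nat.le_two_mul_div_two_of_even ((haeven m).pow_of_ne_zero two_ne_zero) (by omega)
end

section
/- Let a : Fin (n+1) → ℕ and b : Fin n → ℕ with a_i ≥ b_j + 2 whenever j ∈ {i−1, i} (adjacency) and all values even and positive. Then (1/2)(Σ a_i² − Σ b_j²) ≥ (1/2)(Σ a_i − Σ b_j) + (max a − 1)·1, i.e., width ≥ bridge number; in fact width ≥ 2·(bridge number). -/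
/-!
Append a thin level of width 0 after the last thick level; since every thick level has width
at least 2, each thick level `x` is now paired with a thin level `y` satisfying `y + 2 ≤ x`.
The two inequalities then follow by adding up, over the pairs, the elementary bounds
`y² + 2x ≤ x² + 2y` and `y² + x ≤ x² + y`, together with `y² + 3x ≤ x² + y + 2` at a thickest
level.
-/

open Finset

theorem sq_add_le_sq_add_of_le {x y : ℕ} (h : y ≤ x) : y ^ 2 + x ≤ x ^ 2 + y := by
  nlinarith [Nat.mul_le_mul h h]

theorem sq_add_three_mul_le_of_add_two_le {x y : ℕ} (h : y + 2 ≤ x) :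
    y ^ 2 + 3 * x ≤ x ^ 2 + y + 2 := by
  nlinarith

theorem sq_add_two_mul_le_of_add_two_le {x y : ℕ} (h : y + 2 ≤ x) :
    y ^ 2 + 2 * x ≤ x ^ 2 + 2 * y := by
  nlinarith

section PairedSums

variable {ι : Type*} {s : Finset ι} {f g : ι → ℕ}

theorem sum_sq_add_two_mul_sum_le (h : ∀ i ∈ s, g i + 2 ≤ f i) :
    ∑ i ∈ s, g i ^ 2 + 2 * ∑ i ∈ s, f i ≤ ∑ i ∈ s, f i ^ 2 + 2 * ∑ i ∈ s, g i := by
  simp only [mul_sum, ← sum_add_distrib]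
  exact sum_le_sum fun i hi => sq_add_two_mul_le_of_add_two_le (h i hi)

theorem sum_sq_add_sum_add_two_mul_le (h : ∀ i ∈ s, g i + 2 ≤ f i) {k : ι} (hk : k ∈ s) :
    ∑ i ∈ s, g i ^ 2 + ∑ i ∈ s, f i + 2 * f k ≤ ∑ i ∈ s, f i ^ 2 + ∑ i ∈ s, g i + 2 := by
  classical
  have hrest : ∑ i ∈ s.erase k, (g i ^ 2 + f i) ≤ ∑ i ∈ s.erase k, (f i ^ 2 + g i) :=
    sum_le_sum fun i hi => sq_add_le_sq_add_of_le (by linarith [h i (mem_of_mem_erase hi)])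
  have hmax := sq_add_three_mul_le_of_add_two_le (h k hk)
  rw [sum_add_distrib, sum_add_distrib] at hrest
  rw [← add_sum_erase s _ hk, ← add_sum_erase s f hk, ← add_sum_erase s _ hk,
    ← add_sum_erase s g hk]
  omega

end PairedSums

theorem width_bounds_of_paired {ι : Type*} [Fintype ι] [Nonempty ι] (f g : ι → ℕ)
    (h : ∀ i, g i + 2 ≤ f i) :
    (∑ i, f i ^ 2 - ∑ i, g i ^ 2) / 2 ≥ (∑ i, f i - ∑ i, g i) / 2 + (univ.sup f - 1) ∧
    (∑ i, f i ^ 2 - ∑ i, g i ^ 2) / 2 ≥ 2 * ((∑ i, f i - ∑ i, g i) / 2) := by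
  have h' : ∀ i ∈ univ, g i + 2 ≤ f i := fun i _ => h i
  obtain ⟨k, -, hk⟩ := exists_mem_eq_sup univ univ_nonempty f
  have hsum : ∑ i, g i ≤ ∑ i, f i := sum_le_sum fun i _ => by linarith [h i]
  have hbridge := sum_sq_add_sum_add_two_mul_le h' (mem_univ k)
  have hdouble := sum_sq_add_two_mul_sum_le h'
  rw [hk]
  omega

theorem stmt_16_general (n : ℕ) (a : Fin (n + 1) → ℕ) (b : Fin n → ℕ)
    (hadj : ∀ j : Fin n, b j + 2 ≤ a j.castSucc ∧ b j + 2 ≤ a j.succ)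
    (haeven : ∀ i, Even (a i))
    (hapos : ∀ i, 0 < a i) :
    (∑ i, (a i) ^ 2 - ∑ j, (b j) ^ 2) / 2 ≥
      (∑ i, a i - ∑ j, b j) / 2 + (Finset.univ.sup a - 1) ∧
    (∑ i, (a i) ^ 2 - ∑ j, (b j) ^ 2) / 2 ≥
      2 * ((∑ i, a i - ∑ j, b j) / 2) := by
  set b' : Fin (n + 1) → ℕ := Fin.snoc b 0
  have hpaired : ∀ i, b' i + 2 ≤ a i := by
    refine Fin.lastCases ?_ (fun j => ?_)
    · obtain ⟨r, hr⟩ := haeven (Fin.last n)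
      have := hapos (Fin.last n)
      simp only [b', Fin.snoc_last]
      omega
    · simpa only [b', Fin.snoc_castSucc] using (hadj j).1
  have hsum : ∑ j, b j = ∑ i, b' i := by simp [b', Fin.sum_univ_castSucc]
  have hsum_sq : ∑ j, b j ^ 2 = ∑ i, b' i ^ 2 := by simp [b', Fin.sum_univ_castSucc]
  rw [hsum, hsum_sq]
  exact width_bounds_of_paired a b' hpaired

theorem stmt_16 (n : ℕ) (a : Fin (n + 1) → ℕ) (b : Fin n → ℕ)
    (hadj : ∀ j : Fin n, b j + 2 ≤ a j.castSucc ∧ b j + 2 ≤ a j.succ)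
    (haeven : ∀ i, Even (a i)) (hbeven : ∀ j, Even (b j))
    (hapos : ∀ i, 0 < a i) :
    (∑ i, (a i) ^ 2 - ∑ j, (b j) ^ 2) / 2 ≥
      (∑ i, a i - ∑ j, b j) / 2 + (Finset.univ.sup a - 1) ∧
    (∑ i, (a i) ^ 2 - ∑ j, (b j) ^ 2) / 2 ≥
      2 * ((∑ i, a i - ∑ j, b j) / 2) :=
  stmt_16_general n a b hadj haeven hapos
end
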